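/- arXiv:1812.06820 — 2 statements merged into one kernel-verified Lean document; each statement's English description precedes it below -/
import Mathlib

section
/- Let K, U be nonempty convex subsets of a Banach space X such that K ∩ cor U is nonempty, and suppose x₀ ∈ K ∩ cor U and x₀* ∈ T(x₀) satisfy ⟨x₀*, y − x₀⟩ ≥ 0 for all y ∈ K ∩ cor U. Then ⟨x₀*, z − x₀⟩ ≥ 0 for all z ∈ K, i.e. x₀ ∈ S(T, K). -/
/-!
The core of a convex set `U` is algebraically open: segments from a core point to any point of
`U` stay in the core until their far end. Hence for `z ∈ K` a short initial piece of the segment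
`[x₀, z]` lies in `K ∩ core U`, and on it `f (y - x₀) = t * f (z - x₀)` with `t > 0`.
-/

open Set Filter

variable {X : Type*} [NormedAddCommGroup X] [NormedSpace ℝ X] [CompleteSpace X]

/-- The set of duality-pairing values `⟨f, y - x⟩` for `f` ranging over `S ⊆ X*`. -/
def pairSet {X : Type*} [NormedAddCommGroup X] [NormedSpace ℝ X]
    (S : Set (X →L[ℝ] ℝ)) (v : X) : Set ℝ :=
  (fun f : X →L[ℝ] ℝ => f v) '' S

/-- `T` is upper sign-continuous on a convex set `K`. -/
def UpperSignCont {X : Type*} [NormedAddCommGroup X] [NormedSpace ℝ X]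
    (T : X → Set (X →L[ℝ] ℝ)) (K : Set X) : Prop :=
  ∀ x ∈ K, ∀ y ∈ K,
    (∀ t ∈ Set.Ioo (0 : ℝ) 1, 0 ≤ sInf (pairSet (T (t • x + (1 - t) • y)) (y - x))) →
    0 ≤ sSup (pairSet (T x) (y - x))

/-- `T` is lower sign-continuous on a convex set `K`. -/
def LowerSignCont {X : Type*} [NormedAddCommGroup X] [NormedSpace ℝ X]
    (T : X → Set (X →L[ℝ] ℝ)) (K : Set X) : Prop :=
  ∀ x ∈ K, ∀ y ∈ K,
    (∀ t ∈ Set.Ioo (0 : ℝ) 1, 0 ≤ sInf (pairSet (T (t • x + (1 - t) • y)) (y - x))) →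
    0 ≤ sInf (pairSet (T x) (y - x))

/-- `T` is locally upper sign-continuous at `x`. -/
def LocallyUpperSignCont {X : Type*} [NormedAddCommGroup X] [NormedSpace ℝ X]
    (T : X → Set (X →L[ℝ] ℝ)) (x : X) : Prop :=
  ∃ U : Set X, U ∈ nhds x ∧ Convex ℝ U ∧
    ∃ Φ : X → Set (X →L[ℝ] ℝ),
      UpperSignCont Φ U ∧
      ∀ u ∈ U, (Φ u).Nonempty ∧ Convex ℝ (Φ u) ∧
        IsCompact (show Set (WeakDual ℝ X) from Φ u) ∧ Φ u ⊆ T u \ {0}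

/-- The convex-hull map of `T`. -/
def convMap {X : Type*} [NormedAddCommGroup X] [NormedSpace ℝ X]
    (T : X → Set (X →L[ℝ] ℝ)) : X → Set (X →L[ℝ] ℝ) :=
  fun u => convexHull ℝ (T u)

/-- The algebraic interior (core) of a set `A`. -/
def core {X : Type*} [AddCommGroup X] [Module ℝ X] (A : Set X) : Set X :=
  {a ∈ A | ∀ z : X, ∃ l > (0 : ℝ), ∀ t ∈ Set.Ico (0 : ℝ) l, a + t • z ∈ A}

section Core

variable {E : Type*} [AddCommGroup E] [Module ℝ E]

theorem Convex.add_smul_sub_mem_core {U : Set E} (hU : Convex ℝ U) {a u : E}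
    (ha : a ∈ core U) (hu : u ∈ U) {t : ℝ} (ht₀ : 0 ≤ t) (ht₁ : t < 1) :
    a + t • (u - a) ∈ core U := by
  have ht : 0 < 1 - t := by linarith
  refine ⟨hU.add_smul_sub_mem ha.1 hu ⟨ht₀, ht₁.le⟩, fun z => ?_⟩
  obtain ⟨l, hl, hmem⟩ := ha.2 z
  refine ⟨(1 - t) * l, by positivity, fun s ⟨hs₀, hs⟩ => ?_⟩
  have hp : a + (s / (1 - t)) • z ∈ U :=
    hmem _ ⟨by positivity, (div_lt_iff₀ ht).mpr (by linarith)⟩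
  have hcomb : (1 - t) • (a + (s / (1 - t)) • z) + t • u = a + t • (u - a) + s • z := by
    rw [smul_add, smul_smul, mul_div_cancel₀ s ht.ne', smul_sub, sub_smul, one_smul]
    abel
  simpa only [hcomb] using hU hp hu ht.le ht₀ (by ring)

theorem Convex.core_subset_core_core {U : Set E} (hU : Convex ℝ U) :
    core U ⊆ core (core U) := by
  intro a ha
  refine ⟨ha, fun z => ?_⟩
  obtain ⟨l, hl, hmem⟩ := ha.2 z
  have hu : a + (l / 2) • z ∈ U := hmem _ ⟨by positivity, by linarith⟩
  refine ⟨l / 2, by positivity, fun t ⟨ht₀, ht⟩ => ?_⟩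
  have hpt := hU.add_smul_sub_mem_core ha hu (t := t / (l / 2)) (by positivity)
    ((div_lt_one (by positivity)).mpr ht)
  rwa [add_sub_cancel_left, smul_smul, div_mul_cancel₀ t (by positivity)] at hpt

theorem exists_pos_add_smul_sub_mem_inter_core {K U : Set E} (hK : Convex ℝ K)
    (hU : Convex ℝ U) {x₀ z : E} (hx₀ : x₀ ∈ K ∩ core U) (hz : z ∈ K) :
    ∃ t : ℝ, 0 < t ∧ x₀ + t • (z - x₀) ∈ K ∩ core U := by
  obtain ⟨l, hl, hmem⟩ := (hU.core_subset_core_core hx₀.2).2 (z - x₀)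
  have htl : min l 1 / 2 < l := by linarith [min_le_left l 1]
  have ht₁ : min l 1 / 2 ≤ 1 := by linarith [min_le_right l 1]
  have ht₀ : 0 < min l 1 / 2 := by positivity
  exact ⟨_, ht₀, hK.add_smul_sub_mem hx₀.1 hz ⟨ht₀.le, ht₁⟩, hmem _ ⟨ht₀.le, htl⟩⟩

end Core

theorem stmt_16_general (K U : Set X)
    (hKc : Convex ℝ K) (hUc : Convex ℝ U)
    (x₀ : X) (hx₀ : x₀ ∈ K ∩ core U) (f : X →L[ℝ] ℝ)
    (h : ∀ y ∈ K ∩ core U, 0 ≤ f (y - x₀)) :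
    ∀ z ∈ K, 0 ≤ f (z - x₀) := by
  intro z hz
  obtain ⟨t, ht, hy⟩ := exists_pos_add_smul_sub_mem_inter_core hKc hUc hx₀ hz
  have hfy := h _ hy
  rw [add_sub_cancel_left, map_smul, smul_eq_mul] at hfy
  exact nonneg_of_mul_nonneg_right hfy ht

theorem stmt_16 (T : X → Set (X →L[ℝ] ℝ)) (K U : Set X)
    (hK : K.Nonempty) (hKc : Convex ℝ K) (hU : U.Nonempty) (hUc : Convex ℝ U)
    (hKU : (K ∩ core U).Nonempty)
    (x₀ : X) (hx₀ : x₀ ∈ K ∩ core U) (f : X →L[ℝ] ℝ) (hf : f ∈ T x₀)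
    (h : ∀ y ∈ K ∩ core U, 0 ≤ f (y - x₀)) :
    ∀ z ∈ K, 0 ≤ f (z - x₀) :=
  stmt_16_general K U hKc hUc x₀ hx₀ f h
end

section
/- Let T : X ⇉ X* be quasimonotone with nonempty values, K ⊆ X, x ∈ cor K, and suppose conv T is lower semicontinuous at x. If for every nonzero x* ∈ X* the set T(x) is not contained in ℝ₊₊·x* = {t·x* : t > 0}, then 0 ∈ T(x). Conversely, if 0 ∈ T(x) then T(x) ⊄ ℝ₊₊·x* for every nonzero x*. -/
open Set Filter

variable {X : Type*} [NormedAddCommGroup X] [NormedSpace ℝ X] [CompleteSpace X]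

/-- `T` is quasimonotone (everywhere). -/
def Quasimonotone {X : Type*} [NormedAddCommGroup X] [NormedSpace ℝ X]
    (T : X → Set (X →L[ℝ] ℝ)) : Prop :=
  ∀ x y : X, (∃ f ∈ T x, 0 < f (y - x)) → ∀ g ∈ T y, 0 ≤ g (y - x)

/-- A set-valued map is lower semicontinuous at `x`. -/
def LowerSemicontAt {X : Type*} [NormedAddCommGroup X] [NormedSpace ℝ X]
    (F : X → Set (X →L[ℝ] ℝ)) (x : X) : Prop :=
  ∀ V : Set (X →L[ℝ] ℝ), IsOpen V → (F x ∩ V).Nonempty →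
    ∃ U ∈ nhds x, ∀ u ∈ U, (F u ∩ V).Nonempty

/-! If `0 ∉ T x`, pick `x* ∈ T x` and, by hypothesis, `y* ∈ T x` that is not a positive multiple
of `x*`; then some direction `d` has `x* d > 0 > y* d`. Lower semicontinuity of `conv T` at `x`
yields points `x - s • d` arbitrarily close to `x` where `conv T` contains a functional positive
on `d`, whereas quasimonotonicity, applied to `y*`, makes every element of `T (x - s • d)`, hence of
its convex hull, nonpositive on `d`. -/

/-- Otherwise a correction along `ker f` of a point where `f = 1` makes `g` negative. -/
theorem LinearMap.exists_nonneg_smul_of_nonneg_of_pos {𝕜 M : Type*} [Field 𝕜] [LinearOrder 𝕜]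
    [IsStrictOrderedRing 𝕜] [AddCommGroup M] [Module 𝕜 M] {f g : M →ₗ[𝕜] 𝕜} (hf : f ≠ 0)
    (h : ∀ d, 0 < f d → 0 ≤ g d) : ∃ t : 𝕜, 0 ≤ t ∧ g = t • f := by
  obtain ⟨e₀, he₀⟩ : ∃ e, f e ≠ 0 := by
    by_contra! H
    exact hf (LinearMap.ext H)
  set e := (f e₀)⁻¹ • e₀
  have hfe : f e = 1 := by simp [e, he₀]
  have hker : ∀ z, f z = 0 → g z = 0 := by
    intro z hz
    by_contra hgz
    have := h (e - ((g e + 1) / g z) • z) (by simp [hfe, hz])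
    simp only [map_sub, map_smul, smul_eq_mul, div_mul_cancel₀ _ hgz] at this
    linarith
  refine ⟨g e, h e (by simp [hfe]), LinearMap.ext fun z => ?_⟩
  have := hker (z - f z • e) (by simp [hfe])
  simp only [map_sub, map_smul, smul_eq_mul, LinearMap.smul_apply] at this ⊢
  linear_combination this

theorem ContinuousLinearMap.exists_pos_neg_of_forall_ne_pos_smul {E : Type*}
    [AddCommGroup E] [Module ℝ E] [TopologicalSpace E] {f g : E →L[ℝ] ℝ} (hf : f ≠ 0)
    (hg : g ≠ 0) (h : ∀ t : ℝ, 0 < t → g ≠ t • f) : ∃ d, 0 < f d ∧ g d < 0 := by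
  by_contra! H
  have hf' : (f : E →ₗ[ℝ] ℝ) ≠ 0 := fun h0 =>
    hf (ContinuousLinearMap.coe_injective (by simpa using h0))
  obtain ⟨t, ht, hgt'⟩ := LinearMap.exists_nonneg_smul_of_nonneg_of_pos hf' (g := g) H
  have hgt : g = t • f := by ext z; exact LinearMap.congr_fun hgt' z
  rcases ht.eq_or_lt with rfl | ht
  · exact hg (by simpa using hgt)
  · exact h t ht hgt

theorem LowerSemicontAt.eventually_exists_apply_pos {E : Type*} [NormedAddCommGroup E]
    [NormedSpace ℝ E] {F : E → Set (E →L[ℝ] ℝ)} {x d : E} (hF : LowerSemicontAt F x)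
    {f : E →L[ℝ] ℝ} (hf : f ∈ F x) (hfd : 0 < f d) : ∀ᶠ u in nhds x, ∃ g ∈ F u, 0 < g d := by
  have hV : IsOpen {g : E →L[ℝ] ℝ | 0 < g d} :=
    isOpen_lt continuous_const (ContinuousLinearMap.apply ℝ ℝ d).continuous
  obtain ⟨U, hU, hFU⟩ := hF _ hV ⟨f, hf, hfd⟩
  exact Filter.mem_of_superset hU fun u hu => hFU u hu

theorem Quasimonotone.convexHull_subset_apply_nonpos {E : Type*} [NormedAddCommGroup E]
    [NormedSpace ℝ E] {T : E → Set (E →L[ℝ] ℝ)} (hq : Quasimonotone T) {x d : E}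
    {f : E →L[ℝ] ℝ} (hf : f ∈ T x) (hfd : f d < 0) {s : ℝ} (hs : 0 < s) :
    convMap T (x - s • d) ⊆ {g | g d ≤ 0} := by
  have hdir : x - s • d - x = -(s • d) := by abel
  refine convexHull_min (fun g hg => ?_) (convex_halfSpace_le (f := fun g : E →L[ℝ] ℝ => g d)
    ⟨fun _ _ => rfl, fun _ _ => rfl⟩ 0)
  have hpair : ∀ g : E →L[ℝ] ℝ, g (x - s • d - x) = -(s * g d) := by
    simp [hdir]
  have hfpos : 0 < f (x - s • d - x) := by
    rw [hpair]; exact neg_pos.mpr (mul_neg_of_pos_of_neg hs hfd)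
  have := hq x (x - s • d) ⟨f, hf, hfpos⟩ g hg
  rw [hpair] at this
  exact nonpos_of_mul_nonpos_right (by linarith) hs

theorem stmt_19_general (T : X → Set (X →L[ℝ] ℝ)) (hq : Quasimonotone T)
    (hne : ∀ u, (T u).Nonempty) (x : X)
    (hlsc : LowerSemicontAt (convMap T) x) :
    (∀ f : X →L[ℝ] ℝ, f ≠ 0 → ¬ (T x ⊆ {g | ∃ t : ℝ, 0 < t ∧ g = t • f}))
      ↔ (0 : X →L[ℝ] ℝ) ∈ T x := by
  constructor
  · intro h
    by_contra h0
    obtain ⟨f, hf⟩ := hne x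
    have hf0 : f ≠ 0 := ne_of_mem_of_not_mem hf h0
    obtain ⟨g, hg, hgf⟩ := not_subset.mp (h f hf0)
    obtain ⟨d, hfd, hgd⟩ := ContinuousLinearMap.exists_pos_neg_of_forall_ne_pos_smul hf0
      (ne_of_mem_of_not_mem hg h0) fun t ht hgt => hgf ⟨t, ht, hgt⟩
    have hpath : Tendsto (fun s : ℝ => x - s • d) (nhdsWithin 0 (Ioi 0)) (nhds x) := by
      have : Continuous fun s : ℝ => x - s • d := by fun_prop
      simpa using (this.tendsto 0).mono_left nhdsWithin_le_nhds
    obtain ⟨s, ⟨g', hg', hg'd⟩, hs⟩ :=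
      ((hpath.eventually (hlsc.eventually_exists_apply_pos (subset_convexHull ℝ _ hf) hfd)).and
        self_mem_nhdsWithin).exists
    exact (hq.convexHull_subset_apply_nonpos hg hgd hs hg').not_gt hg'd
  · rintro h0 f hf hsub
    obtain ⟨t, ht, h0t⟩ := hsub h0
    exact hf ((smul_eq_zero.mp h0t.symm).resolve_left ht.ne')

theorem stmt_19 (T : X → Set (X →L[ℝ] ℝ)) (hq : Quasimonotone T)
    (hne : ∀ u, (T u).Nonempty) (K : Set X) (x : X) (hx : x ∈ core K)
    (hlsc : LowerSemicontAt (convMap T) x) :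
    (∀ f : X →L[ℝ] ℝ, f ≠ 0 → ¬ (T x ⊆ {g | ∃ t : ℝ, 0 < t ∧ g = t • f}))
      ↔ (0 : X →L[ℝ] ℝ) ∈ T x :=
  stmt_19_general T hq hne x hlsc
end
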